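/- Let G be a finite group acting vertex-transitively on a finite connected cubic (3-regular) graph Γ, and let α be a vertex. Then the stabilizer G_α is a {2,3}-group, i.e., every prime dividing |G_α| is at most 3. -/

import Mathlib

/-!
An element of prime order `p > 3` of the stabilizer of `α` permutes the three neighbours of each
vertex it fixes, and a permutation of a set of fewer than `p` points whose `p`-th power is trivial
is itself trivial. So it fixes every neighbour of a fixed vertex, hence, by connectedness, every
vertex, contradicting Cauchy's theorem.
-/

theorem Equiv.Perm.eq_one_of_pow_prime_eq_one {α : Type*} [Fintype α] {σ : Equiv.Perm α} {p : ℕ}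
    (hp : p.Prime) (hcard : Fintype.card α < p) (hσ : σ ^ p = 1) : σ = 1 := by
  classical
  rcases hp.eq_one_or_self_of_dvd _ (orderOf_dvd_of_pow_eq_one hσ) with h | h
  · exact orderOf_eq_one_iff.mp h
  · have hdvd : p ∣ (Fintype.card α).factorial := by
      rw [← h, ← Fintype.card_perm]
      exact orderOf_dvd_card
    exact absurd ((hp.dvd_factorial).mp hdvd) hcard.not_ge

namespace SimpleGraph

variable {V : Type*} {Γ : SimpleGraph V} {g : Equiv.Perm V} {p : ℕ}

theorem apply_eq_of_adj_of_pow_prime_eq_one [Γ.LocallyFinite]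
    (hg : ∀ u v, Γ.Adj (g u) (g v) ↔ Γ.Adj u v) (hp : p.Prime) (hgp : g ^ p = 1)
    {v w : V} (hdeg : Γ.degree v < p) (hv : g v = v) (hvw : Γ.Adj v w) : g w = w := by
  have hmaps : ∀ u, g u ∈ Γ.neighborSet v ↔ u ∈ Γ.neighborSet v := fun u => by
    simpa only [mem_neighborSet, hv] using hg v u
  have hσ : g.subtypePerm hmaps = 1 := by
    refine Equiv.Perm.eq_one_of_pow_prime_eq_one hp
      (by rwa [card_neighborSet_eq_degree]) ?_
    simp only [Equiv.Perm.subtypePerm_pow, hgp]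
    rfl
  simpa using congrArg (fun σ : Equiv.Perm (Γ.neighborSet v) => (σ ⟨w, hvw⟩ : V)) hσ

theorem eq_one_of_pow_prime_eq_one_of_apply_eq [Γ.LocallyFinite] (hconn : Γ.Connected)
    (hg : ∀ u v, Γ.Adj (g u) (g v) ↔ Γ.Adj u v) (hp : p.Prime) (hgp : g ^ p = 1)
    (hdeg : ∀ v, Γ.degree v < p) {α : V} (hα : g α = α) : g = 1 := by
  have hwalk : ∀ {a b : V}, Γ.Walk a b → g a = a → g b = b := by
    intro a b walk
    induction walk with
    | nil => exact id
    | cons hadj _ ih =>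
      exact fun ha => ih (apply_eq_of_adj_of_pow_prime_eq_one hg hp hgp (hdeg _) ha hadj)
  ext v
  exact hwalk (hconn α v).some hα

end SimpleGraph

theorem stmt_11_general {V : Type*} [Fintype V] (Γ : SimpleGraph V)
    [DecidableRel Γ.Adj] (hconn : Γ.Connected)
    (hcubic : ∀ v : V, Γ.degree v = 3)
    (G : Subgroup (Equiv.Perm V))
    (haut : ∀ g ∈ G, ∀ u v : V, Γ.Adj (g u) (g v) ↔ Γ.Adj u v)
    (α : V) :
    ∀ p : ℕ, p.Prime →
      p ∣ Nat.card (G ⊓ MulAction.stabilizer (Equiv.Perm V) α : Subgroup (Equiv.Perm V)) →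
      p ≤ 3 := by
  intro p hp hdvd
  by_contra! h3p
  have : Fact p.Prime := ⟨hp⟩
  obtain ⟨x, hx⟩ := exists_prime_orderOf_dvd_card' p hdvd
  obtain ⟨hxG, hxα⟩ := Subgroup.mem_inf.mp x.2
  have hxp : (x : Equiv.Perm V) ^ p = 1 := by
    rw [← Subgroup.coe_pow, ← hx, pow_orderOf_eq_one, Subgroup.coe_one]
  have hx1 : x = 1 := Subtype.ext <|
    SimpleGraph.eq_one_of_pow_prime_eq_one_of_apply_eq hconn (haut _ hxG) hp hxp
      (fun v => hcubic v ▸ h3p) hxα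
  rw [hx1, orderOf_one] at hx
  exact hp.one_lt.ne hx

theorem stmt_11 {V : Type*} [Fintype V] (Γ : SimpleGraph V)
    [DecidableRel Γ.Adj] (hconn : Γ.Connected)
    (hcubic : ∀ v : V, Γ.degree v = 3)
    (G : Subgroup (Equiv.Perm V))
    (haut : ∀ g ∈ G, ∀ u v : V, Γ.Adj (g u) (g v) ↔ Γ.Adj u v)
    (htrans : ∀ u v : V, ∃ g ∈ G, g u = v)
    (α : V) :
    ∀ p : ℕ, p.Prime →
      p ∣ Nat.card (G ⊓ MulAction.stabilizer (Equiv.Perm V) α : Subgroup (Equiv.Perm V)) →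
      p ≤ 3 :=
  stmt_11_general Γ hconn hcubic G haut α
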